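/- Let u, v ∈ (0,1) and let α, β ∈ (−1,1) with α ≠ 0, β ≠ 0, and set ρ = αβ. Then C(u,v;ρ) = ∫_{−∞}^{∞} Φ((Φ⁻¹(u) − α·z)/√(1−α²)) · Φ((Φ⁻¹(v) − β·z)/√(1−β²)) · φ(z) dz. -/

import Mathlib

/-!
With `Z, ε₁, ε₂` independent standard normals, `X = α Z + √(1 - α²) ε₁` and
`Y = β Z + √(1 - β²) ε₂` are standard normal with correlation `αβ`, and given `Z = z` they are
independent with `P(X < h | Z = z) = Φ((h - α z) / √(1 - α²))`. Analytically: completing the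
square in `z` shows that the joint density of `(Z, X, Y)` is `φ₂(x, y; αβ)` times a normal density
in `z`, so integrating out `z` leaves `φ₂`; Fubini then turns the quadrant integral of `φ₂` into
the `z`-integral of the product of the two conditional distribution functions.
-/

open MeasureTheory Real Set

/-- Standard normal density φ. -/
noncomputable def stdPdf (x : ℝ) : ℝ :=
  (1 / Real.sqrt (2 * Real.pi)) * Real.exp (-x ^ 2 / 2)

/-- Standard normal distribution function Φ. -/
noncomputable def stdCdf (h : ℝ) : ℝ := ∫ x in Set.Iio h, stdPdf x

/-- Inverse Φ⁻¹ of the standard normal distribution function (on (0,1)). -/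
noncomputable def stdQuantile : ℝ → ℝ := Function.invFun stdCdf

/-- Bivariate standard normal density φ₂ with correlation ρ. -/
noncomputable def binPdf (x y ρ : ℝ) : ℝ :=
  (1 / (2 * Real.pi * Real.sqrt (1 - ρ ^ 2))) *
    Real.exp (-(x ^ 2 - 2 * ρ * x * y + y ^ 2) / (2 * (1 - ρ ^ 2)))

/-- Bivariate standard normal distribution function Φ₂. -/
noncomputable def binCdf (h k ρ : ℝ) : ℝ :=
  ∫ x in Set.Iio h, ∫ y in Set.Iio k, binPdf x y ρ

/-- The bivariate normal copula C(u,v;ρ) = Φ₂(Φ⁻¹(u),Φ⁻¹(v);ρ). -/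
noncomputable def normCopula (u v ρ : ℝ) : ℝ :=
  binCdf (stdQuantile u) (stdQuantile v) ρ

/-- g(u;ρ) = Φ(√((1−ρ)/(1+ρ))·Φ⁻¹(u)). -/
noncomputable def gFun (u ρ : ℝ) : ℝ :=
  stdCdf (Real.sqrt ((1 - ρ) / (1 + ρ)) * stdQuantile u)

lemma stdPdf_nonneg (x : ℝ) : 0 ≤ stdPdf x := by
  unfold stdPdf; positivity

lemma continuous_stdPdf : Continuous stdPdf := by
  unfold stdPdf; fun_prop

lemma stdPdf_eq_const_mul_exp (x : ℝ) :
    stdPdf x = (√(2 * π))⁻¹ * exp (-(1 / 2) * x ^ 2) := by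
  rw [stdPdf, one_div]; ring_nf

lemma integrable_stdPdf : Integrable stdPdf :=
  ((integrable_exp_neg_mul_sq (b := 1 / 2) (by norm_num)).const_mul (√(2 * π))⁻¹).congr
    (.of_forall fun x => (stdPdf_eq_const_mul_exp x).symm)

lemma integral_stdPdf : ∫ x, stdPdf x = 1 := by
  simp_rw [stdPdf_eq_const_mul_exp]
  rw [integral_const_mul, integral_gaussian, div_div_eq_mul_div, div_one, mul_comm π]
  exact inv_mul_cancel₀ (by positivity)

noncomputable def normalPdf (c r x : ℝ) : ℝ := stdPdf ((x - c) / r) / r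

lemma normalPdf_nonneg (c x : ℝ) {r : ℝ} (hr : 0 ≤ r) : 0 ≤ normalPdf c r x :=
  div_nonneg (stdPdf_nonneg _) hr

lemma integrable_normalPdf (c : ℝ) {r : ℝ} (hr : r ≠ 0) : Integrable (normalPdf c r) :=
  ((integrable_stdPdf.comp_div hr).comp_sub_right c).div_const r

lemma integral_normalPdf (c : ℝ) {r : ℝ} (hr : 0 < r) : ∫ x, normalPdf c r x = 1 := by
  simp only [normalPdf]
  rw [integral_div, integral_sub_right_eq_self (fun x => stdPdf (x / r)) c,
    Measure.integral_comp_div, integral_stdPdf, smul_eq_mul, mul_one, abs_of_pos hr,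
    div_self hr.ne']

lemma setIntegral_Iio_normalPdf (c b : ℝ) {r : ℝ} (hr : 0 < r) :
    ∫ x in Iio b, normalPdf c r x = stdCdf ((b - c) / r) := by
  have hind : ∀ x, (Iio b).indicator (normalPdf c r) x
      = (Iio ((b - c) / r)).indicator stdPdf ((x - c) / r) / r := by
    intro x
    have hmem : x ∈ Iio b ↔ (x - c) / r ∈ Iio ((b - c) / r) := by
      simp only [mem_Iio, div_lt_div_iff_of_pos_right hr, sub_lt_sub_iff_right]
    by_cases hx : x ∈ Iio b
    · rw [indicator_of_mem hx, indicator_of_mem (hmem.1 hx), normalPdf]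
    · rw [indicator_of_notMem hx, indicator_of_notMem (hmem.not.1 hx), zero_div]
  rw [← integral_indicator measurableSet_Iio, funext hind, integral_div,
    integral_sub_right_eq_self (fun x => (Iio ((b - c) / r)).indicator stdPdf (x / r)) c,
    Measure.integral_comp_div, integral_indicator measurableSet_Iio, smul_eq_mul,
    abs_of_pos hr, mul_div_cancel_left₀ _ hr.ne', stdCdf]

/-- The joint density of `(Z, X, Y)` in the one-factor model `X = α Z + s ε₁`, `Y = β Z + t ε₂`
with `Z, ε₁, ε₂` independent standard normal. -/
noncomputable def oneFactorPdf (α β s t z x y : ℝ) : ℝ :=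
  normalPdf (α * z) s x * normalPdf (β * z) t y * stdPdf z

section OneFactor

variable (α β : ℝ) {s t : ℝ}

lemma oneFactorPdf_nonneg (hs : 0 ≤ s) (ht : 0 ≤ t) (z x y : ℝ) :
    0 ≤ oneFactorPdf α β s t z x y :=
  mul_nonneg (mul_nonneg (normalPdf_nonneg _ _ hs) (normalPdf_nonneg _ _ ht)) (stdPdf_nonneg z)

lemma continuous_oneFactorPdf (s t : ℝ) :
    Continuous fun q : ℝ × ℝ × ℝ => oneFactorPdf α β s t q.1 q.2.1 q.2.2 := by
  unfold oneFactorPdf normalPdf stdPdf; fun_prop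

lemma integral_oneFactorPdf_prod (hs : 0 < s) (ht : 0 < t) (z : ℝ) :
    ∫ p : ℝ × ℝ, oneFactorPdf α β s t z p.1 p.2 ∂volume.prod volume = stdPdf z := by
  simp only [oneFactorPdf]
  rw [integral_mul_const, integral_prod_mul (normalPdf (α * z) s) (normalPdf (β * z) t),
    integral_normalPdf _ hs, integral_normalPdf _ ht, one_mul, one_mul]

lemma integrable_oneFactorPdf (hs : 0 < s) (ht : 0 < t) :
    Integrable (fun q : ℝ × ℝ × ℝ => oneFactorPdf α β s t q.1 q.2.1 q.2.2)
      (volume.prod (volume.prod volume)) := by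
  refine (integrable_prod_iff (continuous_oneFactorPdf α β s t).aestronglyMeasurable).2
    ⟨.of_forall fun z => ?_, ?_⟩
  · dsimp only [oneFactorPdf]
    exact ((integrable_normalPdf _ hs.ne').mul_prod (integrable_normalPdf _ ht.ne')).mul_const _
  · refine integrable_stdPdf.congr (.of_forall fun z => ?_)
    simp only [Real.norm_of_nonneg (oneFactorPdf_nonneg α β hs.le ht.le _ _ _)]
    exact (integral_oneFactorPdf_prod α β hs ht z).symm

lemma integral_stdCdf_mul_stdCdf_mul_stdPdf (hs : 0 < s) (ht : 0 < t) (h k : ℝ) :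
    ∫ z, stdCdf ((h - α * z) / s) * stdCdf ((k - β * z) / t) * stdPdf z
      = ∫ x in Iio h, ∫ y in Iio k, ∫ z, oneFactorPdf α β s t z x y := by
  have hF := integrable_oneFactorPdf α β hs ht
  have hquad : (volume.restrict (Iio h)).prod (volume.restrict (Iio k)) ≤ volume.prod volume :=
    Measure.prod_mono Measure.restrict_le_self Measure.restrict_le_self
  calc ∫ z, stdCdf ((h - α * z) / s) * stdCdf ((k - β * z) / t) * stdPdf z
      = ∫ z, ∫ p : ℝ × ℝ, oneFactorPdf α β s t z p.1 p.2
          ∂(volume.restrict (Iio h)).prod (volume.restrict (Iio k)) := by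
        congr 1; funext z
        simp only [oneFactorPdf]
        rw [integral_mul_const, integral_prod_mul, setIntegral_Iio_normalPdf _ _ hs,
          setIntegral_Iio_normalPdf _ _ ht]
    _ = ∫ p : ℝ × ℝ, (∫ z, oneFactorPdf α β s t z p.1 p.2)
          ∂(volume.restrict (Iio h)).prod (volume.restrict (Iio k)) :=
        integral_integral_swap (f := fun z (p : ℝ × ℝ) => oneFactorPdf α β s t z p.1 p.2)
          (hF.mono_measure (Measure.prod_mono le_rfl hquad))
    _ = ∫ x in Iio h, ∫ y in Iio k, ∫ z, oneFactorPdf α β s t z x y := by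
        refine integral_prod (fun p : ℝ × ℝ => ∫ z, oneFactorPdf α β s t z p.1 p.2) ?_
        exact hF.swap.integral_prod_left.mono_measure hquad

end OneFactor

section UnitVariance

variable {α β s t : ℝ}

lemma one_sub_mul_sq_pos (hs : 0 < s) (hs2 : s ^ 2 = 1 - α ^ 2) (ht : 0 < t)
    (ht2 : t ^ 2 = 1 - β ^ 2) : 0 < 1 - (α * β) ^ 2 := by
  have hst : 0 < s ^ 2 * t ^ 2 := by positivity
  nlinarith [sq_nonneg α, sq_nonneg β]

/-- The joint density of `(Z, X, Y)` is the density of `(X, Y)` times the (normal) conditional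
density of `Z` given `(X, Y)`. -/
lemma oneFactorPdf_eq_binPdf_mul_normalPdf (hs : 0 < s) (hs2 : s ^ 2 = 1 - α ^ 2) (ht : 0 < t)
    (ht2 : t ^ 2 = 1 - β ^ 2) (z x y : ℝ) :
    oneFactorPdf α β s t z x y = binPdf x y (α * β) *
      normalPdf ((α * t ^ 2 * x + β * s ^ 2 * y) / (1 - (α * β) ^ 2))
        (s * t / √(1 - (α * β) ^ 2)) z := by
  have hD := one_sub_mul_sq_pos hs hs2 ht ht2
  set D := 1 - (α * β) ^ 2
  have hsquare : -((x - α * z) / s) ^ 2 / 2 + -((y - β * z) / t) ^ 2 / 2 + -z ^ 2 / 2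
      = -(x ^ 2 - 2 * (α * β) * x * y + y ^ 2) / (2 * D)
        + -((z - (α * t ^ 2 * x + β * s ^ 2 * y) / D) / (s * t / √D)) ^ 2 / 2 := by
    rw [div_pow, div_pow, div_pow, div_pow, mul_pow, sq_sqrt hD.le, hs2, ht2]
    have hs2' : 1 - α ^ 2 ≠ 0 := hs2 ▸ by positivity
    have ht2' : 1 - β ^ 2 ≠ 0 := ht2 ▸ by positivity
    field_simp
    ring
  have hconst : (√(2 * π))⁻¹ ^ 3 / (s * t) = (2 * π * √D)⁻¹ * ((√(2 * π))⁻¹ / (s * t / √D)) := by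
    have hπ : √(2 * π) ^ 2 = 2 * π := sq_sqrt (by positivity)
    field_simp
    rw [hπ]
  have key := congrArg (fun e => (√(2 * π))⁻¹ ^ 3 / (s * t) * exp e) hsquare
  simp only [exp_add] at key
  nth_rw 2 [hconst] at key
  simp only [oneFactorPdf, normalPdf, stdPdf, binPdf]
  linear_combination key

lemma integral_oneFactorPdf (hs : 0 < s) (hs2 : s ^ 2 = 1 - α ^ 2) (ht : 0 < t)
    (ht2 : t ^ 2 = 1 - β ^ 2) (x y : ℝ) :
    ∫ z, oneFactorPdf α β s t z x y = binPdf x y (α * β) := by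
  have hD := one_sub_mul_sq_pos hs hs2 ht ht2
  simp_rw [oneFactorPdf_eq_binPdf_mul_normalPdf hs hs2 ht ht2]
  rw [integral_const_mul, integral_normalPdf _ (div_pos (mul_pos hs ht) (sqrt_pos.2 hD)), mul_one]

end UnitVariance

theorem copula_single_integral_rep_general (u v α β ρ : ℝ)
    (hα : α ∈ Set.Ioo (-1 : ℝ) 1) (hβ : β ∈ Set.Ioo (-1 : ℝ) 1)
    (hρ : ρ = α * β) :
    normCopula u v ρ =
      ∫ z : ℝ,
        stdCdf ((stdQuantile u - α * z) / Real.sqrt (1 - α ^ 2)) *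
          stdCdf ((stdQuantile v - β * z) / Real.sqrt (1 - β ^ 2)) *
          stdPdf z := by
  have hα2 : 0 < 1 - α ^ 2 := by nlinarith [hα.1, hα.2]
  have hβ2 : 0 < 1 - β ^ 2 := by nlinarith [hβ.1, hβ.2]
  rw [integral_stdCdf_mul_stdCdf_mul_stdPdf α β (sqrt_pos.2 hα2) (sqrt_pos.2 hβ2), normCopula,
    binCdf, hρ]
  simp_rw [integral_oneFactorPdf (sqrt_pos.2 hα2) (sq_sqrt hα2.le) (sqrt_pos.2 hβ2)
    (sq_sqrt hβ2.le)]

theorem copula_single_integral_rep (u v α β ρ : ℝ)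
    (hu : u ∈ Set.Ioo (0 : ℝ) 1) (hv : v ∈ Set.Ioo (0 : ℝ) 1)
    (hα : α ∈ Set.Ioo (-1 : ℝ) 1) (hβ : β ∈ Set.Ioo (-1 : ℝ) 1)
    (hα0 : α ≠ 0) (hβ0 : β ≠ 0) (hρ : ρ = α * β) :
    normCopula u v ρ =
      ∫ z : ℝ,
        stdCdf ((stdQuantile u - α * z) / Real.sqrt (1 - α ^ 2)) *
          stdCdf ((stdQuantile v - β * z) / Real.sqrt (1 - β ^ 2)) *
          stdPdf z :=
  copula_single_integral_rep_general u v α β ρ hα hβ hρ
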